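/- arXiv:1903.04968 — 3 statements merged into one kernel-verified Lean document; each statement's English description precedes it below -/
import Mathlib

section
/- Let H be an n-uniform hypergraph that is not 2-colorable and satisfies m₂(H) = n·C(2n−1, n). Then every ordering π of the vertices of H separates at most one simple pair of edges. -/
open Classical

/-- `π` separates the simple pair `(X, Y)`: with `X ∩ Y = {y}`, all of `X \ {y}`
precedes `y` and `y` precedes all of `Y \ {y}` in the ordering `π`. -/
def Separates {V : Type*} [Fintype V] [DecidableEq V] (π : V ≃ Fin (Fintype.card V))
    (X Y : Finset V) : Prop :=
  ∃ y, X ∩ Y = {y} ∧ (∀ x ∈ X, x ≠ y → π x < π y) ∧ (∀ z ∈ Y, z ≠ y → π y < π z)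

/-- A hypergraph with edge set `E` is 2-colorable if some 2-coloring of the vertices
leaves no edge monochromatic. -/
def TwoColorable {V : Type*} (E : Finset (Finset V)) : Prop :=
  ∃ c : V → Bool, ∀ X ∈ E, (∃ v ∈ X, c v = true) ∧ (∃ v ∈ X, c v = false)

/-- `m₂(H)`: the number of ordered simple pairs of edges. -/
def m2 {V : Type*} [DecidableEq V] (E : Finset (Finset V)) : ℕ :=
  ((E ×ˢ E).filter fun p => (p.1 ∩ p.2).card = 1).card

/-!
Colour the vertices greedily along an ordering `π`: a vertex is coloured `false` exactly when it
completes an edge whose earlier vertices are all `true`. No edge is then all `true`, so a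
non-2-colourable hypergraph has an all-`false` edge `Y`; its first vertex `y` completes an edge `X`
with `X ∩ Y = {y}`, and `π` separates `(X, Y)`. Hence every ordering separates at least one simple
pair.

On the other hand, a fixed simple pair of `n`-sets is separated by exactly `N! (n-1)!² / (2n-1)!`
of the `N!` orderings of the `N` vertices, because only the relative order of the `2n - 1` vertices
involved matters. Summing over the `m₂(H) = n·C(2n-1, n)` simple pairs, the orderings separate
`N!` pairs in total, so each ordering separates exactly one.
-/

open Finset Function
open scoped Nat

section Greedy

variable {V : Type*} [Fintype V] [DecidableEq V]

noncomputable def greedyColoring (E : Finset (Finset V)) (π : V ≃ Fin (Fintype.card V)) :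
    V → Bool :=
  (InvImage.wf π wellFounded_lt).fix fun v c =>
    !decide (∃ X ∈ E, v ∈ X ∧ ∀ x ∈ X, x ≠ v → ∃ h : π x < π v, c x h = true)

theorem greedyColoring_eq_false_iff (E : Finset (Finset V)) (π : V ≃ Fin (Fintype.card V))
    (v : V) :
    greedyColoring E π v = false ↔
      ∃ X ∈ E, v ∈ X ∧ ∀ x ∈ X, x ≠ v → π x < π v ∧ greedyColoring E π x = true := by
  rw [greedyColoring, WellFounded.fix_eq]
  simp only [Bool.not_eq_false', decide_eq_true_eq, exists_prop]

theorem exists_separates_of_not_twoColorable {E : Finset (Finset V)}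
    (hE : ∀ X ∈ E, X.Nonempty) (hE2 : ¬TwoColorable E) (π : V ≃ Fin (Fintype.card V)) :
    ∃ X ∈ E, ∃ Y ∈ E, Separates π X Y := by
  set c := greedyColoring E π
  have hfalse : ∀ X ∈ E, ∃ v ∈ X, c v = false := by
    intro X hX
    obtain ⟨v, hv, hmax⟩ := X.exists_max_image π (hE X hX)
    by_contra! htrue
    refine htrue v hv ((greedyColoring_eq_false_iff E π v).2 ⟨X, hX, hv, fun x hx hxv => ?_⟩)
    exact ⟨(hmax x hx).lt_of_ne (π.injective.ne hxv), by simpa using htrue x hx⟩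
  obtain ⟨Y, hY, hYfalse⟩ : ∃ Y ∈ E, ∀ v ∈ Y, c v = false := by
    simp only [TwoColorable, not_exists, not_forall, not_and] at hE2
    obtain ⟨Y, hY, hmono⟩ := hE2 c
    refine ⟨Y, hY, fun v hv => ?_⟩
    by_contra h
    obtain ⟨w, hw, hwf⟩ := hfalse Y hY
    exact hmono ⟨v, hv, by simpa using h⟩ w hw hwf
  obtain ⟨y, hy, hmin⟩ := Y.exists_min_image π (hE Y hY)
  obtain ⟨X, hX, hyX, hXtrue⟩ := (greedyColoring_eq_false_iff E π y).1 (hYfalse y hy)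
  refine ⟨X, hX, Y, hY, y, ?_, fun x hx hxy => (hXtrue x hx hxy).1,
    fun z hz hzy => (hmin z hz).lt_of_ne (π.injective.ne hzy.symm)⟩
  refine eq_singleton_iff_unique_mem.2 ⟨mem_inter.2 ⟨hyX, hy⟩, fun z hz => ?_⟩
  rw [mem_inter] at hz
  by_contra hzy
  exact Bool.false_ne_true ((hYfalse z hz.2).symm.trans (hXtrue z hz.1 hzy).2)

end Greedy

theorem exists_equiv_fin_lt_iff {α β : Type*} [Fintype α] [LinearOrder β] {g : α → β}
    (hg : Injective g) : ∃ r : α ≃ Fin (Fintype.card α), ∀ a b, r a < r b ↔ g a < g b := by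
  let : LinearOrder α := LinearOrder.lift' g hg
  exact ⟨(Fintype.orderIsoFinOfCardEq α rfl).symm.toEquiv,
    fun a b => (Fintype.orderIsoFinOfCardEq α rfl).symm.lt_iff_lt⟩

theorem card_equiv_comp_eq {α β ι : Type*} [Fintype α] [Fintype β] [DecidableEq α]
    [DecidableEq β] [Fintype ι] [DecidableEq ι] (f : α → ι) (g : β → ι)
    (hfg : ∀ i, Fintype.card {a // f a = i} = Fintype.card {b // g b = i}) :
    Fintype.card {e : α ≃ β // g ∘ e = f} = ∏ i, (Fintype.card {a // f a = i})! := by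
  let e₀ : α ≃ β := (Equiv.sigmaFiberEquiv f).symm.trans
    ((Equiv.sigmaCongrRight fun i => Fintype.equivOfCardEq (hfg i)).trans
      (Equiv.sigmaFiberEquiv g))
  have he₀ : ∀ b, f (e₀.symm b) = g b := fun b =>
    ((Fintype.equivOfCardEq (hfg (g b))).symm ⟨b, rfl⟩).2
  rw [← DomMulAct.stabilizer_card f]
  refine Fintype.card_congr (Equiv.subtypeEquiv ((Equiv.refl α).equivCongr e₀.symm) fun e => ?_)
  simp [funext_iff, he₀]

theorem mem_iff_lt_card_of_forall_lt {k : ℕ} {T : Finset (Fin k)}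
    (hT : ∀ t ∈ T, ∀ u ∉ T, t < u) (j : Fin k) : j ∈ T ↔ (j : ℕ) < #T := by
  constructor
  · intro hj
    have hsub : Iic j ⊆ T := fun i hi =>
      by_contra fun hiT => (mem_Iic.1 hi).not_gt (hT j hj i hiT)
    simpa [Fin.card_Iic] using card_le_card hsub
  · intro hj
    by_contra hjT
    have hsub : T ⊆ Iio j := fun t ht => mem_Iio.2 (hT t ht j hjT)
    have := card_le_card hsub
    rw [Fin.card_Iio] at this
    omega

section Sorts

variable {α β ι : Type*} [LinearOrder ι]

def Sorts [LT β] (f : α → ι) (ρ : α → β) : Prop :=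
  ∀ a b, f a < f b → ρ a < ρ b

variable [Fintype α] {f : α → ι}

theorem Sorts.lt_iff_lt_card_filter {ρ : α ≃ Fin (Fintype.card α)} (hρ : Sorts f ρ)
    (j : Fin (Fintype.card α)) (i : ι) : f (ρ.symm j) < i ↔ (j : ℕ) < #{a | f a < i} := by
  have hT : ∀ t ∈ (univ.filter (f · < i)).map ρ.toEmbedding,
      ∀ u ∉ (univ.filter (f · < i)).map ρ.toEmbedding, t < u := by
    simp only [mem_map_equiv, mem_filter, mem_univ, true_and, not_lt]
    intro t ht u hu
    simpa using hρ _ _ (ht.trans_le hu)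
  rw [← card_map ρ.toEmbedding, ← mem_iff_lt_card_of_forall_lt hT, mem_map_equiv]
  simp

theorem Sorts.comp_symm_eq {ρ ρ' : α ≃ Fin (Fintype.card α)} (hρ : Sorts f ρ)
    (hρ' : Sorts f ρ') : f ∘ ρ.symm = f ∘ ρ'.symm :=
  funext fun j => eq_of_forall_gt_iff fun i => by
    rw [comp_apply, comp_apply, hρ.lt_iff_lt_card_filter, hρ'.lt_iff_lt_card_filter]

theorem card_filter_sorts [DecidableEq α] [Fintype ι] [DecidableEq ι] :
    #{ρ : α ≃ Fin (Fintype.card α) | Sorts f ρ} = ∏ i, (Fintype.card {a // f a = i})! := by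
  obtain ⟨ρ₀, hρ₀⟩ := exists_equiv_fin_lt_iff (g := fun a => toLex (f a, Fintype.equivFin α a))
    fun a b h => (Fintype.equivFin α).injective (congrArg (fun p => (ofLex p).2) h)
  replace hρ₀ : Sorts f ρ₀ := fun a b h => (hρ₀ a b).2 (Prod.Lex.lt_iff.2 (Or.inl h))
  have hsorts : ∀ ρ : α ≃ Fin (Fintype.card α), Sorts f ρ ↔ (f ∘ ρ₀.symm) ∘ ρ = f := by
    refine fun ρ => ⟨fun hρ => ?_, fun hρ a b hab => ?_⟩
    · rw [hρ₀.comp_symm_eq hρ]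
      ext a
      simp
    · rw [← hρ] at hab
      simpa using hρ₀ _ _ hab
  rw [← Fintype.card_subtype, Fintype.card_congr (Equiv.subtypeEquivRight hsorts)]
  exact card_equiv_comp_eq f _ fun i =>
    Fintype.card_congr (ρ₀.subtypeEquiv fun a => by simp)

end Sorts

section Separation

variable {V : Type*} [Fintype V] [DecidableEq V]

theorem card_subtype_mem_finset (S : Finset V) (p : V → Prop) [DecidablePred p] :
    Fintype.card {s : S // p s} = #(S.filter p) := by
  rw [← Fintype.card_coe, Fintype.card_congr (Equiv.subtypeSubtypeEquivSubtypeInter (· ∈ S) p)]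
  simp

def pairBlock (X : Finset V) (y v : V) : Fin 3 :=
  if v = y then 1 else if v ∈ X then 0 else 2

theorem separates_iff_sorts_pairBlock {X Y : Finset V} {y : V} (hXY : X ∩ Y = {y})
    (π : V ≃ Fin (Fintype.card V)) :
    Separates π X Y ↔ Sorts (fun s : ↥(X ∪ Y) => pairBlock X y s) (fun s => π s) := by
  have hmem : ∀ v, v ∈ X ∧ v ∈ Y ↔ v = y := fun v => by
    rw [← mem_inter, hXY, mem_singleton]
  constructor
  · rintro ⟨y', hy', hX, hY⟩
    obtain rfl : y = y' := singleton_injective (hXY.symm.trans hy')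
    have hXY' : ∀ s ∈ X, s ≠ y → ∀ t ∈ Y, t ≠ y → π s < π t := fun s hs hsy t ht hty =>
      (hX s hs hsy).trans (hY t ht hty)
    rintro ⟨s, hs⟩ ⟨t, ht⟩
    rw [mem_union] at hs ht
    simp only [pairBlock]
    split_ifs <;> simp_all
  · intro h
    refine ⟨y, hXY, fun x hx hxy => ?_, fun z hz hzy => ?_⟩
    · refine h ⟨x, mem_union_left _ hx⟩ ⟨y, mem_union_left _ ((hmem y).2 rfl).1⟩ ?_
      simp [pairBlock, hxy, hx]
    · refine h ⟨y, mem_union_left _ ((hmem y).2 rfl).1⟩ ⟨z, mem_union_right _ hz⟩ ?_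
      have hzX : z ∉ X := fun hzX => hzy ((hmem z).1 ⟨hzX, hz⟩)
      simp [pairBlock, hzy, hzX]

theorem prod_factorial_card_pairBlock_fiber {X Y : Finset V} {y : V} (hXY : X ∩ Y = {y}) :
    ∏ i, (Fintype.card {s : ↥(X ∪ Y) // pairBlock X y s = i})! = (#X - 1)! * (#Y - 1)! := by
  have hmem : ∀ v, v ∈ X ∧ v ∈ Y ↔ v = y := fun v => by
    rw [← mem_inter, hXY, mem_singleton]
  have hyX : y ∈ X := ((hmem y).2 rfl).1
  have hyY : y ∈ Y := ((hmem y).2 rfl).2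
  have hXY' : ∀ v ∈ X, v ≠ y → v ∉ Y := fun v hvX hvy hv => hvy ((hmem v).1 ⟨hvX, hv⟩)
  have h0 : (X ∪ Y).filter (pairBlock X y · = 0) = X.erase y := by
    ext v; simp only [mem_filter, mem_union, mem_erase]; unfold pairBlock; split_ifs <;> simp_all
  have h1 : (X ∪ Y).filter (pairBlock X y · = 1) = {y} := by
    ext v; simp only [mem_filter, mem_union, mem_singleton]; unfold pairBlock; split_ifs <;> simp_all
  have h2 : (X ∪ Y).filter (pairBlock X y · = 2) = Y.erase y := by
    ext v; simp only [mem_filter, mem_union, mem_erase]; unfold pairBlock; split_ifs <;> simp_all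
  rw [Fin.prod_univ_three, card_subtype_mem_finset _ (pairBlock X y · = 0),
    card_subtype_mem_finset _ (pairBlock X y · = 1),
    card_subtype_mem_finset _ (pairBlock X y · = 2), h0, h1, h2, card_erase_of_mem hyX,
    card_erase_of_mem hyY, card_singleton, Nat.factorial_one, mul_one]

open Equiv in
theorem card_separates_mul_factorial {X Y : Finset V} {y : V} (hXY : X ∩ Y = {y}) :
    #{π : V ≃ Fin (Fintype.card V) | Separates π X Y} * (#(X ∪ Y))! =
      (Fintype.card V)! * ((#X - 1)! * (#Y - 1)!) := by
  -- Double count the pairs `(σ, π)` with `σ` a permutation of `X ∪ Y` and `π ∘ σ` separating.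
  -- For fixed `π`, composing with the relative order `r` of `X ∪ Y` under `π` turns these `σ`
  -- into the orderings of `X ∪ Y` that sort `pairBlock`.
  have hdc := card_mul_eq_card_mul
    (fun (σ : Perm ↥(X ∪ Y)) (π : V ≃ Fin (Fintype.card V)) =>
      Separates ((Perm.ofSubtype σ).trans π) X Y)
    (s := univ) (t := univ) (m := #{π : V ≃ Fin (Fintype.card V) | Separates π X Y})
    (n := (#X - 1)! * (#Y - 1)!) (fun σ _ => ?_) (fun π _ => ?_)
  · rwa [Finset.card_univ, Finset.card_univ, Fintype.card_perm, Fintype.card_coe,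
      Fintype.card_equiv (Fintype.equivFin V), mul_comm] at hdc
  · refine card_equiv ((Perm.ofSubtype σ).symm.equivCongr (Equiv.refl _)) fun π => ?_
    simp only [bipartiteAbove, mem_filter, mem_univ, true_and]
    rfl
  · obtain ⟨r, hr⟩ := exists_equiv_fin_lt_iff (g := fun s : ↥(X ∪ Y) => π s)
      (π.injective.comp Subtype.val_injective)
    calc #(univ.bipartiteBelow _ π)
        = #{σ : Perm ↥(X ∪ Y) | Sorts (fun s : ↥(X ∪ Y) => pairBlock X y s) (r ∘ σ)} := by
          congr 1
          ext σ
          simp only [bipartiteBelow, mem_filter, mem_univ, true_and,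
            separates_iff_sorts_pairBlock hXY, Sorts, comp_apply, trans_apply,
            Perm.ofSubtype_apply_coe, hr]
      _ = #{ρ : ↥(X ∪ Y) ≃ Fin (Fintype.card ↥(X ∪ Y)) |
            Sorts (fun s : ↥(X ∪ Y) => pairBlock X y s) ρ} :=
          card_equiv ((Equiv.refl _).equivCongr r) (by simp)
      _ = (#X - 1)! * (#Y - 1)! := by
          rw [card_filter_sorts, prod_factorial_card_pairBlock_fiber hXY]

end Separation

theorem mul_choose_mul_factorial_mul_factorial {n : ℕ} (hn : 0 < n) :
    n * (2 * n - 1).choose n * ((n - 1)! * (n - 1)!) = (2 * n - 1)! := by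
  have h := Nat.choose_mul_factorial_mul_factorial (show n ≤ 2 * n - 1 by omega)
  rw [show 2 * n - 1 - n = n - 1 by omega] at h
  rw [← h, ← Nat.mul_factorial_pred hn.ne']
  ring

section Hypergraph

variable {V : Type*} [Fintype V] [DecidableEq V]

def simplePairs (E : Finset (Finset V)) : Finset (Finset V × Finset V) :=
  (E ×ˢ E).filter fun p => #(p.1 ∩ p.2) = 1

theorem card_inter_eq_one_of_separates {π : V ≃ Fin (Fintype.card V)} {X Y : Finset V}
    (h : Separates π X Y) : #(X ∩ Y) = 1 := by
  obtain ⟨y, hy, -⟩ := h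
  rw [hy, card_singleton]

theorem sum_card_separates_mul_factorial {E : Finset (Finset V)} {n : ℕ}
    (hunif : ∀ X ∈ E, #X = n) :
    (∑ π : V ≃ Fin (Fintype.card V), #{p ∈ simplePairs E | Separates π p.1 p.2}) *
      (2 * n - 1)! = m2 E * ((Fintype.card V)! * ((n - 1)! * (n - 1)!)) := by
  have hswap : ∑ π : V ≃ Fin (Fintype.card V), #{p ∈ simplePairs E | Separates π p.1 p.2} =
      ∑ p ∈ simplePairs E, #{π : V ≃ Fin (Fintype.card V) | Separates π p.1 p.2} :=
    (sum_card_bipartiteAbove_eq_sum_card_bipartiteBelow _).symm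
  rw [hswap, sum_mul, sum_congr rfl fun p hp => ?_, sum_const, smul_eq_mul]
  · rfl
  obtain ⟨hmem, hp1⟩ := mem_filter.1 hp
  obtain ⟨hX, hY⟩ := mem_product.1 hmem
  obtain ⟨y, hy⟩ := card_eq_one.1 hp1
  have hunion : #(p.1 ∪ p.2) = 2 * n - 1 := by
    have := card_union_add_card_inter p.1 p.2
    rw [hp1, hunif _ hX, hunif _ hY] at this
    omega
  have h := card_separates_mul_factorial hy
  rwa [hunion, hunif _ hX, hunif _ hY] at h

theorem one_le_card_filter_separates {E : Finset (Finset V)} (hE : ∀ X ∈ E, X.Nonempty)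
    (hE2 : ¬TwoColorable E) (π : V ≃ Fin (Fintype.card V)) :
    1 ≤ #{p ∈ simplePairs E | Separates π p.1 p.2} := by
  obtain ⟨X, hX, Y, hY, hs⟩ := exists_separates_of_not_twoColorable hE hE2 π
  exact card_pos.2 ⟨(X, Y), mem_filter.2 ⟨mem_filter.2
    ⟨mem_product.2 ⟨hX, hY⟩, card_inter_eq_one_of_separates hs⟩, hs⟩⟩

end Hypergraph

theorem stmt_8 {V : Type*} [Fintype V] [DecidableEq V] (n : ℕ)
    (E : Finset (Finset V)) (hunif : ∀ X ∈ E, X.card = n)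
    (hnc : ¬ TwoColorable E)
    (hm2 : m2 E = n * Nat.choose (2 * n - 1) n) :
    ∀ π : V ≃ Fin (Fintype.card V),
      ∀ X ∈ E, ∀ Y ∈ E, ∀ X' ∈ E, ∀ Y' ∈ E,
        (X ∩ Y).card = 1 → (X' ∩ Y').card = 1 →
        Separates π X Y → Separates π X' Y' → X = X' ∧ Y = Y' := by
  intro π X hX Y hY X' hX' Y' hY' hXY hXY' hs hs'
  have hn : 0 < n := by
    have := card_le_card (inter_subset_left : X ∩ Y ⊆ X)
    rw [hXY, hunif X hX] at this
    omega
  have hpos : ∀ σ, 1 ≤ #{p ∈ simplePairs E | Separates σ p.1 p.2} :=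
    one_le_card_filter_separates (fun Z hZ => card_pos.1 (hunif Z hZ ▸ hn)) hnc
  have hsum : ∑ σ : V ≃ Fin (Fintype.card V), #{p ∈ simplePairs E | Separates σ p.1 p.2} =
      ∑ _σ : V ≃ Fin (Fintype.card V), 1 := by
    rw [sum_const, smul_eq_mul, mul_one, Finset.card_univ,
      Fintype.card_equiv (Fintype.equivFin V)]
    refine Nat.eq_of_mul_eq_mul_right (Nat.factorial_pos (2 * n - 1)) ?_
    rw [sum_card_separates_mul_factorial hunif, hm2, ← mul_choose_mul_factorial_mul_factorial hn]
    ring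
  have hone := (sum_eq_sum_iff_of_le fun σ _ => hpos σ).1 hsum.symm π (mem_univ _)
  exact Prod.ext_iff.1 (card_le_one.1 hone.symm.le (X, Y)
    (by simp [simplePairs, hX, hY, hXY, hs]) (X', Y') (by simp [simplePairs, hX', hY', hXY', hs']))
end

section
/- Let X, Y, X', Y' be n-element edges with |X ∩ Y| = 1, |X' ∩ Y'| = 1, Y ≠ Y', X ∩ Y = {y}, X' ∩ Y' = {y'}, with y ∉ Y' and (X \ {y}) ∩ Y' = ∅. Then there exists an ordering π of the vertex set that separates both (X, Y) and (X', Y'). -/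
open Classical

/-!
The ordering is obtained by ranking the vertices in five blocks, `X \ {y}`, `y`, `X' \ {y'}`,
`y'`, everything else, and breaking ties arbitrarily. `(X, Y)` is separated because `Y \ {y}`
misses `X`; `(X', Y')` is separated because `y'` and `Y' \ {y'}` miss the first two blocks
(as `y ∉ Y'` and `(X \ {y}) ∩ Y' = ∅`) and `Y' \ {y'}` misses `X'`.
-/

open Finset

section Ordering

variable {V : Type*} [Fintype V]

theorem exists_equiv_fin_lt_of_injective {β : Type*} [LinearOrder β] {f : V → β}
    (hf : Function.Injective f) :
    ∃ π : V ≃ Fin (Fintype.card V), ∀ a b, f a < f b → π a < π b := by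
  have hcard : (univ.image f).card = Fintype.card V := by
    rw [card_image_of_injective _ hf, card_univ]
  let toImage : V ≃ univ.image f :=
    Equiv.ofBijective (fun v => ⟨f v, mem_image_of_mem f (mem_univ v)⟩)
      ⟨fun a b hab => hf (Subtype.ext_iff.1 hab), by
        rintro ⟨_, hb⟩
        obtain ⟨v, -, rfl⟩ := mem_image.1 hb
        exact ⟨v, rfl⟩⟩
  let ι := (univ.image f).orderIsoOfFin hcard
  exact ⟨toImage.trans ι.symm.toEquiv, fun a b hab => ι.symm.lt_iff_lt.2 hab⟩

theorem exists_equiv_fin_lt_of_lt {α : Type*} [LinearOrder α] (w : V → α) :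
    ∃ π : V ≃ Fin (Fintype.card V), ∀ a b, w a < w b → π a < π b := by
  have hf : Function.Injective fun v => toLex (w v, Fintype.equivFin V v) :=
    fun a b hab => (Fintype.equivFin V).injective (congrArg (fun p => (ofLex p).2) hab)
  obtain ⟨π, hπ⟩ := exists_equiv_fin_lt_of_injective hf
  exact ⟨π, fun a b hab => hπ a b (Prod.Lex.lt_iff.2 (Or.inl hab))⟩

theorem separates_of_lt [DecidableEq V] {α : Type*} [LT α] {π : V ≃ Fin (Fintype.card V)}
    {w : V → α} (hπ : ∀ a b, w a < w b → π a < π b) {X Y : Finset V} {y : V}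
    (hy : X ∩ Y = {y}) (hX : ∀ x ∈ X, x ≠ y → w x < w y) (hY : ∀ z ∈ Y, z ≠ y → w y < w z) :
    Separates π X Y :=
  ⟨y, hy, fun x hx hxy => hπ _ _ (hX x hx hxy), fun z hz hzy => hπ _ _ (hY z hz hzy)⟩

end Ordering

theorem eq_of_mem_of_inter_eq_singleton {V : Type*} [DecidableEq V] {X Y : Finset V} {y v : V}
    (hy : X ∩ Y = {y}) (hX : v ∈ X) (hY : v ∈ Y) : v = y := by
  simpa [hy] using mem_inter.2 ⟨hX, hY⟩

theorem stmt_12_general {V : Type*} [Fintype V] [DecidableEq V]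
    (X Y X' Y' : Finset V) (y y' : V)
    (hy : X ∩ Y = {y}) (hy' : X' ∩ Y' = {y'})
    (hyY' : y ∉ Y') (hdisj : (X \ {y}) ∩ Y' = ∅) :
    ∃ π : V ≃ Fin (Fintype.card V), Separates π X Y ∧ Separates π X' Y' := by
  have hy'Y' : y' ∈ Y' := (mem_inter.1 (hy'.ge (mem_singleton_self y'))).2
  have hY'_outside : ∀ z ∈ Y', z ∉ X \ {y} ∧ z ≠ y := fun z hz =>
    ⟨fun hzX => by simpa [hdisj] using mem_inter.2 ⟨hzX, hz⟩, by rintro rfl; exact hyY' hz⟩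
  let w : V → ℕ := fun v =>
    if v ∈ X \ {y} then 0 else if v = y then 1 else if v ∈ X' \ {y'} then 2
    else if v = y' then 3 else 4
  have hy'_block : y' ∉ X' \ {y'} := notMem_sdiff_of_mem_right (mem_singleton_self y')
  have hwy' : w y' = 3 := by
    simp only [w, if_neg (hY'_outside y' hy'Y').1, if_neg (hY'_outside y' hy'Y').2,
      if_neg hy'_block, ↓reduceIte]
  obtain ⟨π, hπ⟩ := exists_equiv_fin_lt_of_lt w
  refine ⟨π, separates_of_lt hπ hy ?_ ?_, separates_of_lt hπ hy' ?_ ?_⟩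
  · intro x hx hxy
    simp [w, hx, hxy]
  · intro z hz hzy
    have hzX : z ∉ X \ {y} := fun h =>
      hzy (eq_of_mem_of_inter_eq_singleton hy (mem_sdiff.1 h).1 hz)
    simp only [w, if_neg hzX, if_neg hzy]
    split_ifs <;> omega
  · intro x hx hxy'
    have hxX' : x ∈ X' \ {y'} := mem_sdiff.2 ⟨hx, by simpa using hxy'⟩
    rw [hwy']
    simp only [w, if_pos hxX']
    split_ifs <;> omega
  · intro z hz hzy'
    have hzX' : z ∉ X' \ {y'} := fun h =>
      hzy' (eq_of_mem_of_inter_eq_singleton hy' (mem_sdiff.1 h).1 hz)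
    rw [hwy']
    obtain ⟨hzX, hzy⟩ := hY'_outside z hz
    simp only [w, if_neg hzX, if_neg hzy, if_neg hzX', if_neg hzy']
    omega

theorem stmt_12 {V : Type*} [Fintype V] [DecidableEq V] (n : ℕ)
    (X Y X' Y' : Finset V) (y y' : V)
    (hX : X.card = n) (hY : Y.card = n) (hX' : X'.card = n) (hY' : Y'.card = n)
    (hy : X ∩ Y = {y}) (hy' : X' ∩ Y' = {y'})
    (hYne : Y ≠ Y') (hyY' : y ∉ Y') (hdisj : (X \ {y}) ∩ Y' = ∅) :
    ∃ π : V ≃ Fin (Fintype.card V), Separates π X Y ∧ Separates π X' Y' :=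
  stmt_12_general X Y X' Y' y y' hy hy' hyY' hdisj
end

section
/- The number of permutations of a set of size p ≥ 2n−1 that separate a fixed simple pair (X, Y) of n-sets with X ∩ Y = {y} equals p!·(n−1)!·(n−1)!/(2n−1)!. -/
open Classical

/-!
Double counting. A permutation `g` of `S = X ∪ Y` reorders `S` among the positions that an
ordering `π` gives it, and permutes the orderings of `V`. For a fixed `π`, exactly `(n-1)!²` of the
`g` make `π ∘ g` separating: the `n - 1` elements of `X \ {y}` below `y` and the `n - 1` elements
of `Y \ {y}` above it force `y` into the middle of the `2n - 1` positions of `S`, after which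
`X \ {y}` fills the lower half and `Y \ {y}` the upper half in any order. Counting the pairs
`(π, g)` with `π ∘ g` separating in both ways gives `p! (n-1)!² = (2n-1)! · #{separating π}`.
-/

open Finset Nat

theorem card_mul_eq_card_mul_card_filter {G Ω : Type*} [Fintype G] [Fintype Ω]
    (f : G → Ω ≃ Ω) (P : Ω → Prop) [DecidablePred P] {c : ℕ} (hc : ∀ ω, #{g | P (f g ω)} = c) :
    Fintype.card Ω * c = Fintype.card G * #{ω | P ω} := by
  calc Fintype.card Ω * c = ∑ ω, #{g | P (f g ω)} := by simp [hc]
    _ = ∑ g, ∑ ω, if P (f g ω) then 1 else 0 := by simp_rw [card_filter]; exact sum_comm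
    _ = Fintype.card G * #{ω | P ω} := by
      simp_rw [Equiv.sum_comp (f _) (fun ω => if P ω then 1 else 0), ← card_filter]
      simp

theorem card_filter_equiv_comp_eq {α β ι : Type*} [Fintype α] [Fintype β] [Fintype ι]
    [DecidableEq ι] (ℓ : α → ι) (d : β → ι)
    (hcard : ∀ i, Fintype.card {a // ℓ a = i} = Fintype.card {b // d b = i}) :
    #{τ : α ≃ β | d ∘ τ = ℓ} = ∏ i, (Fintype.card {a // ℓ a = i})! := by
  obtain ⟨τ₀, hτ₀⟩ : ∃ τ₀ : α ≃ β, ∀ a, d (τ₀ a) = ℓ a :=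
    ⟨_, Equiv.ofFiberEquiv_map fun i => Fintype.equivOfCardEq (hcard i)⟩
  have hd : ℓ ∘ τ₀.symm = d := funext fun b => by simp [← hτ₀]
  rw [← DomMulAct.stabilizer_card ℓ, Fintype.card_subtype]
  refine card_equiv ((Equiv.refl α).equivCongr τ₀.symm) fun τ => ?_
  simp only [mem_filter, mem_univ, true_and, ← hd]
  rfl

theorem exists_equiv_fin_lt_iff_s17 {α L : Type*} [Fintype α] [LinearOrder L] {f : α → L}
    (hf : Function.Injective f) {n : ℕ} (hn : Fintype.card α = n) :
    ∃ r : α ≃ Fin n, ∀ s t, r s < r t ↔ f s < f t := by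
  let _ : LinearOrder α := LinearOrder.lift' f hf
  exact ⟨(Fintype.orderIsoFinOfCardEq α hn).symm.toEquiv,
    fun _ _ => (Fintype.orderIsoFinOfCardEq α hn).symm.lt_iff_lt⟩

section Median

variable {α : Type*} [Fintype α] {k : ℕ} {ℓ : α → Ordering} {a : α}

theorem separating_iff_comp_eq (heq : ∀ s, ℓ s = .eq ↔ s = a)
    (hlt : Fintype.card {s // ℓ s = .lt} = k) (hgt : Fintype.card {s // ℓ s = .gt} = k)
    (τ : α ≃ Fin (2 * k + 1)) :
    ((∀ s, ℓ s = .lt → τ s < τ a) ∧ (∀ s, ℓ s = .gt → τ a < τ s)) ↔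
      (compare · ⟨k, by omega⟩) ∘ τ = ℓ := by
  constructor
  · rintro ⟨hbelow, habove⟩
    have hk_le : k ≤ τ a :=
      calc k = #{s | ℓ s = .lt} := by rw [← hlt, Fintype.card_subtype]
        _ ≤ #(Iio (τ a)) := card_le_card_of_injOn τ
            (fun s hs => by simpa using hbelow s (by simpa using hs)) τ.injective.injOn
        _ = τ a := Fin.card_Iio _
    have hle_k : k ≤ 2 * k + 1 - 1 - τ a :=
      calc k = #{s | ℓ s = .gt} := by rw [← hgt, Fintype.card_subtype]
        _ ≤ #(Ioi (τ a)) := card_le_card_of_injOn τ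
            (fun s hs => by simpa using habove s (by simpa using hs)) τ.injective.injOn
        _ = 2 * k + 1 - 1 - τ a := Fin.card_Ioi _
    have hmid : τ a = ⟨k, by omega⟩ := Fin.ext (by simp only; omega)
    funext s
    rcases hs : ℓ s
    · simpa [← hmid, compare_lt_iff_lt] using hbelow s hs
    · simp [(heq s).1 hs, hmid]
    · simpa [← hmid, compare_gt_iff_gt] using habove s hs
  · intro h
    have hmid : τ a = ⟨k, by omega⟩ := by simpa using congrFun h a |>.trans ((heq a).2 rfl)
    rw [hmid]
    exact ⟨fun s hs => by simpa [hs, compare_lt_iff_lt] using congrFun h s,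
      fun s hs => by simpa [hs, compare_gt_iff_gt] using congrFun h s⟩

theorem card_filter_separating_equiv_fin (heq : ∀ s, ℓ s = .eq ↔ s = a)
    (hlt : Fintype.card {s // ℓ s = .lt} = k) (hgt : Fintype.card {s // ℓ s = .gt} = k) :
    #{τ : α ≃ Fin (2 * k + 1) | (∀ s, ℓ s = .lt → τ s < τ a) ∧ (∀ s, ℓ s = .gt → τ a < τ s)}
      = k ! * k ! := by
  have hone : Fintype.card {s // ℓ s = .eq} = 1 :=
    Fintype.card_eq_one_iff.2 ⟨⟨a, (heq a).2 rfl⟩, fun s => Subtype.ext ((heq s).1 s.2)⟩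
  have hfibers : ∀ i, Fintype.card {s // ℓ s = i}
      = Fintype.card {j : Fin (2 * k + 1) // compare j ⟨k, by omega⟩ = i} := by
    rintro (_ | _ | _)
    · simp [compare_lt_iff_lt, Fintype.card_subtype, filter_gt_eq_Iio, hlt]
    · simp [hone]
    · simp [compare_gt_iff_gt, Fintype.card_subtype, filter_lt_eq_Ioi, hgt]
      omega
  simp_rw [separating_iff_comp_eq heq hlt hgt]
  calc
    _ = ∏ i, (Fintype.card {s // ℓ s = i})! := by
      convert card_filter_equiv_comp_eq ℓ _ hfibers
    _ = k ! * k ! := by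
      rw [show (univ : Finset Ordering) = {.lt, .eq, .gt} from rfl]
      simp [hlt, hone, hgt]

end Median

theorem card_subtype_mem_eq_card {α : Type*} {S T : Finset α} {p : α → Prop} [DecidablePred p]
    (hT : T ⊆ S) (hp : ∀ v ∈ S, p v ↔ v ∈ T) : Fintype.card {s : S // p s} = #T := by
  rw [← Fintype.card_coe T]
  exact Fintype.card_congr ((Equiv.subtypeEquivRight fun s : S => hp s s.2).trans
    (Equiv.subtypeSubtypeEquivSubtype (hT ·)))

section SimplePair

variable {V : Type*} [DecidableEq V] {X Y : Finset V} {y : V}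

theorem card_union_of_inter_eq_singleton (hy : X ∩ Y = {y}) {k : ℕ} (hX : #X = k + 1)
    (hY : #Y = k + 1) : #(X ∪ Y) = 2 * k + 1 := by
  have := card_union_add_card_inter X Y
  rw [hy, card_singleton, hX, hY] at this
  omega

def sideOf (X : Finset V) (y v : V) : Ordering :=
  if v = y then .eq else if v ∈ X then .lt else .gt

theorem sideOf_eq_eq {v : V} : sideOf X y v = .eq ↔ v = y := by
  unfold sideOf; split_ifs <;> simp_all

theorem sideOf_eq_lt {v : V} : sideOf X y v = .lt ↔ v ∈ X ∧ v ≠ y := by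
  unfold sideOf; split_ifs <;> simp_all

theorem sideOf_eq_gt (hy : X ∩ Y = {y}) {v : V} (hv : v ∈ X ∪ Y) :
    sideOf X y v = .gt ↔ v ∈ Y ∧ v ≠ y := by
  have hXY : v ∈ X → v ∈ Y → v = y := fun hX hY => by simpa [hy] using mem_inter.2 ⟨hX, hY⟩
  unfold sideOf; split_ifs <;> simp_all

theorem separates_iff_sideOf [Fintype V] (hy : X ∩ Y = {y}) (σ : V ≃ Fin (Fintype.card V)) :
    Separates σ X Y ↔ (∀ v ∈ X ∪ Y, sideOf X y v = .lt → σ v < σ y) ∧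
      (∀ v ∈ X ∪ Y, sideOf X y v = .gt → σ y < σ v) := by
  have hsep : Separates σ X Y ↔
      (∀ x ∈ X, x ≠ y → σ x < σ y) ∧ (∀ z ∈ Y, z ≠ y → σ y < σ z) := by
    refine ⟨?_, fun h => ⟨y, hy, h⟩⟩
    rintro ⟨y', hy', h⟩
    rwa [singleton_injective (hy.symm.trans hy')]
  rw [hsep]
  refine and_congr ⟨fun h v _ hv => ?_, fun h x hx hxy => ?_⟩
    ⟨fun h v hv hv' => ?_, fun h z hz hzy => ?_⟩
  · exact h v (sideOf_eq_lt.1 hv).1 (sideOf_eq_lt.1 hv).2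
  · exact h x (mem_union_left _ hx) (sideOf_eq_lt.2 ⟨hx, hxy⟩)
  · exact h v ((sideOf_eq_gt hy hv).1 hv').1 ((sideOf_eq_gt hy hv).1 hv').2
  · exact h z (mem_union_right _ hz) ((sideOf_eq_gt hy (mem_union_right _ hz)).2 ⟨hz, hzy⟩)

theorem card_perm_separates [Fintype V] (hy : X ∩ Y = {y}) {k : ℕ} (hX : #X = k + 1)
    (hY : #Y = k + 1) (π : V ≃ Fin (Fintype.card V)) :
    #{g : Equiv.Perm (X ∪ Y : Finset V) | Separates ((Equiv.Perm.ofSubtype g).trans π) X Y}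
      = k ! * k ! := by
  obtain ⟨hyX, hyY⟩ := mem_inter.1 (hy ▸ mem_singleton_self y)
  have hyS : y ∈ X ∪ Y := mem_union_left _ hyX
  have hS : Fintype.card (X ∪ Y : Finset V) = 2 * k + 1 := by
    rw [Fintype.card_coe, card_union_of_inter_eq_singleton hy hX hY]
  obtain ⟨r, hr⟩ := exists_equiv_fin_lt_iff_s17 (π.injective.comp Subtype.val_injective) hS
  have heq : ∀ s : (X ∪ Y : Finset V), sideOf X y s = .eq ↔ s = ⟨y, hyS⟩ := by
    simp [sideOf_eq_eq, Subtype.ext_iff]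
  have hlt : Fintype.card {s : (X ∪ Y : Finset V) // sideOf X y s = .lt} = k := by
    rw [card_subtype_mem_eq_card (p := (sideOf X y · = .lt))
      ((erase_subset y X).trans subset_union_left)
      fun v _ => by rw [sideOf_eq_lt, mem_erase, and_comm], card_erase_of_mem hyX, hX,
      Nat.add_sub_cancel]
  have hgt : Fintype.card {s : (X ∪ Y : Finset V) // sideOf X y s = .gt} = k := by
    rw [card_subtype_mem_eq_card (p := (sideOf X y · = .gt))
      ((erase_subset y Y).trans subset_union_right)
      fun v hv => by rw [sideOf_eq_gt hy hv, mem_erase, and_comm], card_erase_of_mem hyY, hY,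
      Nat.add_sub_cancel]
  rw [← card_filter_separating_equiv_fin heq hlt hgt]
  refine card_equiv ((Equiv.refl _).equivCongr r) fun g => ?_
  simp +contextual [separates_iff_sideOf hy, hr, Equiv.Perm.ofSubtype_apply_of_mem, hyS,
    -mem_union]

end SimplePair

theorem stmt_17_general {V : Type*} [Fintype V] [DecidableEq V] (n p : ℕ)
    (hp : Fintype.card V = p)
    (X Y : Finset V) (y : V)
    (hX : X.card = n) (hY : Y.card = n) (hy : X ∩ Y = {y}) :
    ((Finset.univ.filter fun π : V ≃ Fin (Fintype.card V) => Separates π X Y).card : ℚ)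
      = (Nat.factorial p : ℚ) * (Nat.factorial (n - 1) : ℚ) * (Nat.factorial (n - 1) : ℚ)
        / (Nat.factorial (2 * n - 1) : ℚ) := by
  obtain ⟨k, rfl⟩ : ∃ k, n = k + 1 := Nat.exists_eq_add_one.2
    (hX ▸ card_pos.2 ⟨y, mem_of_mem_inter_left (hy ▸ mem_singleton_self y)⟩)
  subst hp
  -- `g` acts by `π ↦ (ofSubtype g).trans π`
  have hcount := card_mul_eq_card_mul_card_filter
    (fun g : Equiv.Perm (X ∪ Y : Finset V) =>
      (Equiv.Perm.ofSubtype g).symm.equivCongr (Equiv.refl _))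
    (Separates · X Y) (card_perm_separates hy hX hY)
  rw [Fintype.card_equiv (Fintype.equivFin V), Fintype.card_perm, Fintype.card_coe,
    card_union_of_inter_eq_singleton hy hX hY] at hcount
  rw [show 2 * (k + 1) - 1 = 2 * k + 1 by omega, Nat.add_sub_cancel, eq_div_iff (by positivity)]
  exact_mod_cast by linarith

theorem stmt_17 {V : Type*} [Fintype V] [DecidableEq V] (n p : ℕ)
    (hp : Fintype.card V = p) (hpn : 2 * n - 1 ≤ p)
    (X Y : Finset V) (y : V)
    (hX : X.card = n) (hY : Y.card = n) (hy : X ∩ Y = {y}) :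
    ((Finset.univ.filter fun π : V ≃ Fin (Fintype.card V) => Separates π X Y).card : ℚ)
      = (Nat.factorial p : ℚ) * (Nat.factorial (n - 1) : ℚ) * (Nat.factorial (n - 1) : ℚ)
        / (Nat.factorial (2 * n - 1) : ℚ) :=
  stmt_17_general n p hp X Y y hX hY hy
end
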